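/- Let G, a, m1, m2 be positive reals and set ω = √(G(m1+m2)/a³). Define x, y : ℝ → ℝ² by x(t) = (−m2·a/(m1+m2))·(cos(ωt), sin(ωt)) and y(t) = (m1·a/(m1+m2))·(cos(ωt), sin(ωt)). Then for all t, x''(t) = (m2·G/‖x(t)−y(t)‖³)·(y(t)−x(t)) and y''(t) = (m1·G/‖y(t)−x(t)‖³)·(x(t)−y(t)); i.e., (x,y) is a solution of the two-body problem. -/

import Mathlib

/-!
Both bodies move uniformly on circles about their centre of mass, along the unit vector
`c(t) = (cos ωt, sin ωt)`, so each acceleration is `-ω²` times the position. The separation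
`y - x = a • c(t)` has constant length `a`, and `ω² = G (m1 + m2) / a³` (Kepler's third law)
is exactly what makes `-ω² x` equal to the gravitational pull `m2 G (y - x) / a³`, and likewise for `y`.
-/

open Real

theorem hasDerivAt_euclideanSpace_two {f g : ℝ → ℝ} {f' g' t : ℝ}
    (hf : HasDerivAt f f' t) (hg : HasDerivAt g g' t) :
    HasDerivAt (fun s => !₂[f s, g s]) !₂[f', g'] t := by
  have h : HasDerivAt (fun s => ![f s, g s]) ![f', g'] t := by
    refine hasDerivAt_pi.2 fun i => ?_
    fin_cases i
    exacts [hf, hg]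
  exact (PiLp.hasFDerivAt_toLp 2 ![f t, g t]).comp_hasDerivAt t h

noncomputable def circularMotion (ω t : ℝ) : EuclideanSpace ℝ (Fin 2) :=
  !₂[cos (ω * t), sin (ω * t)]

theorem norm_circularMotion (ω t : ℝ) : ‖circularMotion ω t‖ = 1 := by
  simp [circularMotion, EuclideanSpace.norm_eq, Fin.sum_univ_two]

theorem hasDerivAt_cos_mul (ω t : ℝ) :
    HasDerivAt (fun s => cos (ω * s)) (-(ω * sin (ω * t))) t := by
  simpa [mul_comm] using ((hasDerivAt_id t).const_mul ω).cos

theorem hasDerivAt_sin_mul (ω t : ℝ) :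
    HasDerivAt (fun s => sin (ω * s)) (ω * cos (ω * t)) t := by
  simpa [mul_comm] using ((hasDerivAt_id t).const_mul ω).sin

theorem deriv_circularMotion (ω : ℝ) :
    deriv (circularMotion ω) = fun t => !₂[-(ω * sin (ω * t)), ω * cos (ω * t)] :=
  funext fun t =>
    (hasDerivAt_euclideanSpace_two (hasDerivAt_cos_mul ω t) (hasDerivAt_sin_mul ω t)).deriv

theorem deriv_deriv_circularMotion (ω t : ℝ) :
    deriv (deriv (circularMotion ω)) t = -ω ^ 2 • circularMotion ω t := by
  have h := hasDerivAt_euclideanSpace_two (f := fun s => -(ω * sin (ω * s)))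
    ((hasDerivAt_sin_mul ω t).const_mul ω).neg ((hasDerivAt_cos_mul ω t).const_mul ω)
  rw [deriv_circularMotion, h.deriv]
  ext i
  fin_cases i <;> simp [circularMotion] <;> ring

theorem deriv_deriv_const_smul_circularMotion (r ω t : ℝ) :
    deriv (deriv fun s => r • circularMotion ω s) t = -ω ^ 2 • r • circularMotion ω t := by
  have h : deriv (fun s => r • circularMotion ω s) = fun s => r • deriv (circularMotion ω) s :=
    funext fun s => deriv_fun_const_smul_field r _
  rw [h, deriv_fun_const_smul_field, deriv_deriv_circularMotion, smul_comm]

theorem two_body_circular_solution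
    (G a m1 m2 : ℝ) (hG : 0 < G) (ha : 0 < a) (hm1 : 0 < m1) (hm2 : 0 < m2)
    (ω : ℝ) (hω : ω = Real.sqrt (G * (m1 + m2) / a ^ 3))
    (x y : ℝ → EuclideanSpace ℝ (Fin 2))
    (hx : ∀ t, x t = (-(m2 * a) / (m1 + m2)) •
      (WithLp.toLp 2 ![Real.cos (ω * t), Real.sin (ω * t)] : EuclideanSpace ℝ (Fin 2)))
    (hy : ∀ t, y t = ((m1 * a) / (m1 + m2)) •
      (WithLp.toLp 2 ![Real.cos (ω * t), Real.sin (ω * t)] : EuclideanSpace ℝ (Fin 2))) :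
    ∀ t, deriv (deriv x) t = ((m2 * G) / ‖x t - y t‖ ^ 3) • (y t - x t) ∧
      deriv (deriv y) t = ((m1 * G) / ‖y t - x t‖ ^ 3) • (x t - y t) := by
  intro t
  have hM : 0 < m1 + m2 := by positivity
  have hω2 : ω ^ 2 = G * (m1 + m2) / a ^ 3 := by rw [hω, sq_sqrt]; positivity
  have hddx : deriv (deriv x) t = -ω ^ 2 • x t := by
    rw [funext hx]; exact deriv_deriv_const_smul_circularMotion _ ω t
  have hddy : deriv (deriv y) t = -ω ^ 2 • y t := by
    rw [funext hy]; exact deriv_deriv_const_smul_circularMotion _ ω t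
  have hyx : y t - x t = a • circularMotion ω t := by
    rw [hx t, hy t, ← sub_smul]; congr 1; field_simp; ring
  have hdist : ‖x t - y t‖ = a := by
    rw [← norm_neg, neg_sub, hyx, norm_smul, norm_circularMotion, Real.norm_of_nonneg ha.le, mul_one]
  refine ⟨?_, ?_⟩
  · rw [hddx, hdist, hyx, hx t, smul_smul, smul_smul, hω2]; congr 1; field_simp
  · rw [hddy, norm_sub_rev, hdist, ← neg_sub, hyx, hy t, smul_smul, smul_neg, smul_smul, ← neg_smul,
      hω2]
    congr 1; field_simp
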